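/- For any t > 0 and integer x ≥ 0, √t · e^{-t} · I_x(t) ≤ (1 + x/t)^{-x/2}. -/

import Mathlib

/-- Modified Bessel function of the first kind of integer order `x ≥ 0`,
defined by its power series. -/
noncomputable def besselI (x : ℕ) (t : ℝ) : ℝ :=
  ∑' n : ℕ, (t / 2) ^ (2 * n + x) / (n.factorial * (n + x).factorial)

/-!
For `u * v = (t / 2) ^ 2` the `n`-th term of `I_x(t)` factors as
`(t / (2 v)) ^ x * (u ^ n / n!) * (v ^ (n + x) / (n + x)!)`, so Cauchy–Schwarz bounds
`I_x(t)` by `(t / (2 v)) ^ x * √(I₀(2u) I₀(2v))`, where `I₀(2w) = ∑ (w ^ n / n!) ^ 2`.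
Since `(w ^ n / n!) ^ 2 = C(2n, n) w ^ (2n) / (2n)!` and `C(2n, n) √(2n + 1) ≤ 4 ^ n`, each
term of `I₀(z)` is at most `(z ^ (2n) / (2n)! + z ^ (2n+1) / (2n+1)!) / √z`, whence
`I₀(z) ≤ eᶻ / √z` and `√t e^{-t} I_x(t) ≤ (t / (2v)) ^ x e^{u + v - t}`. With `v = (t + x) / 2`
and `q = 1 + x / t` the right-hand side is `q ^ (-x) * exp (x / 2 * (1 - q⁻¹))`, and
`1 - q⁻¹ ≤ log q` finishes.
-/

open Real
open scoped Nat

theorem tsum_mul_le_sqrt_mul_sqrt {ι : Type*} {f g : ι → ℝ} (hf : ∀ i, 0 ≤ f i)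
    (hg : ∀ i, 0 ≤ g i) (hf_sum : Summable fun i => f i ^ 2) (hg_sum : Summable fun i => g i ^ 2) :
    ∑' i, f i * g i ≤ √(∑' i, f i ^ 2) * √(∑' i, g i ^ 2) := by
  have h := inner_le_Lp_mul_Lq_tsum_of_nonneg HolderConjugate.two_two hf hg
    (by simpa only [rpow_two] using hf_sum) (by simpa only [rpow_two] using hg_sum)
  simpa only [rpow_two, ← sqrt_eq_rpow] using h

theorem Nat.centralBinom_sq_mul_le (n : ℕ) : n.centralBinom ^ 2 * (2 * n + 1) ≤ 16 ^ n := by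
  induction n with
  | zero => simp
  | succ n ih =>
    refine Nat.le_of_mul_le_mul_left ?_ (by positivity : 0 < (n + 1) ^ 2)
    calc (n + 1) ^ 2 * ((n + 1).centralBinom ^ 2 * (2 * (n + 1) + 1))
        = ((n + 1) * (n + 1).centralBinom) ^ 2 * (2 * n + 3) := by ring
      _ = 4 * (2 * n + 1) * (2 * n + 3) * (n.centralBinom ^ 2 * (2 * n + 1)) := by
        rw [Nat.succ_mul_centralBinom_succ]; ring
      _ ≤ 16 * (n + 1) ^ 2 * 16 ^ n := Nat.mul_le_mul (by nlinarith) ih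
      _ = (n + 1) ^ 2 * 16 ^ (n + 1) := by ring

theorem centralBinom_mul_sqrt_le (n : ℕ) : (n.centralBinom : ℝ) * √(2 * n + 1) ≤ 4 ^ n := by
  refine le_of_pow_le_pow_left₀ two_ne_zero (by positivity) ?_
  rw [mul_pow, sq_sqrt (by positivity), ← pow_mul, mul_comm n, pow_mul]
  exact_mod_cast n.centralBinom_sq_mul_le

theorem sq_pow_div_factorial (w : ℝ) (n : ℕ) :
    (w ^ n / n !) ^ 2 = n.centralBinom * w ^ (2 * n) / (2 * n)! := by
  have hfact : (n.centralBinom : ℝ) * n ! * n ! = (2 * n)! := by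
    rw [Nat.centralBinom_eq_two_mul_choose, two_mul]
    exact_mod_cast Nat.add_choose_mul_factorial_mul_factorial n n
  have hpos := n.centralBinom_pos
  rw [← hfact]
  field_simp
  ring

theorem sq_pow_div_factorial_le {w : ℝ} (hw : 0 < w) (n : ℕ) :
    (w ^ n / n !) ^ 2 ≤
      ((2 * w) ^ (2 * n) / (2 * n)! + (2 * w) ^ (2 * n + 1) / (2 * n + 1)!) / √(2 * w) := by
  set z := 2 * w
  set m : ℝ := 2 * n + 1
  have hz : 0 < z := by positivity
  have hm : 0 < m := by positivity
  have hamgm : √z * √m ≤ z + m := by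
    nlinarith [sq_nonneg (√z - √m), sq_sqrt hz.le, sq_sqrt hm.le, sqrt_nonneg z,
      sqrt_nonneg m]
  have hfact : ((2 * n + 1)! : ℝ) = m * (2 * n)! := by
    rw [Nat.factorial_succ]; push_cast; ring
  have hcb : (n.centralBinom : ℝ) * w ^ (2 * n) * √m ≤ z ^ (2 * n) := by
    calc (n.centralBinom : ℝ) * w ^ (2 * n) * √m = n.centralBinom * √m * w ^ (2 * n) := by ring
      _ ≤ 4 ^ n * w ^ (2 * n) := by gcongr; exact centralBinom_mul_sqrt_le n
      _ = z ^ (2 * n) := by rw [mul_pow, pow_mul (2 : ℝ)]; norm_num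
  rw [sq_pow_div_factorial, hfact, pow_succ, div_le_div_iff₀ (by positivity) (by positivity)]
  have hrhs : (z ^ (2 * n) / (2 * n)! + z ^ (2 * n) * z / (m * (2 * n)!)) * (2 * n)! =
      z ^ (2 * n) * (z + m) / m := by
    field_simp
    ring
  rw [hrhs, le_div_iff₀ hm]
  calc n.centralBinom * w ^ (2 * n) * √z * m
      = (n.centralBinom * w ^ (2 * n) * √m) * (√z * √m) := by
        linear_combination (-(n.centralBinom * w ^ (2 * n) * √z)) * mul_self_sqrt hm.le
    _ ≤ z ^ (2 * n) * (z + m) := by gcongr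

theorem summable_sq_pow_div_factorial (w : ℝ) : Summable fun n : ℕ => (w ^ n / n !) ^ 2 := by
  refine (summable_pow_div_factorial (w ^ 2)).of_nonneg_of_le (fun n => by positivity) fun n => ?_
  rw [div_pow, ← pow_mul, mul_comm, pow_mul]
  gcongr
  exact le_self_pow₀ (by exact_mod_cast n.factorial_pos) two_ne_zero

theorem tsum_sq_pow_div_factorial_le {w : ℝ} (hw : 0 < w) :
    ∑' n : ℕ, (w ^ n / n !) ^ 2 ≤ exp (2 * w) / √(2 * w) := by
  set g : ℕ → ℝ := fun k => (2 * w) ^ k / (k !)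
  have hg : HasSum g (exp (2 * w)) := by
    rw [exp_eq_exp_ℝ]; exact NormedSpace.expSeries_div_hasSum_exp _
  have heven : Summable fun n => g (2 * n) :=
    hg.summable.comp_injective (mul_right_injective₀ two_ne_zero)
  have hodd : Summable fun n => g (2 * n + 1) :=
    hg.summable.comp_injective ((add_left_injective 1).comp (mul_right_injective₀ two_ne_zero))
  have hbound :
      HasSum (fun n => (g (2 * n) + g (2 * n + 1)) / √(2 * w)) (exp (2 * w) / √(2 * w)) := by
    rw [← hg.tsum_eq, ← tsum_even_add_odd heven hodd]
    exact (heven.hasSum.add hodd.hasSum).div_const _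
  have hle : ∀ n : ℕ, (w ^ n / n !) ^ 2 ≤ (g (2 * n) + g (2 * n + 1)) / √(2 * w) :=
    sq_pow_div_factorial_le hw
  exact hasSum_le hle (summable_sq_pow_div_factorial w).hasSum hbound

theorem besselI_eq_mul_tsum {t u v : ℝ} (hv : v ≠ 0) (huv : u * v = (t / 2) ^ 2) (x : ℕ) :
    besselI x t = (t / (2 * v)) ^ x * ∑' n : ℕ, u ^ n / n ! * (v ^ (n + x) / (n + x)!) := by
  rw [besselI, ← tsum_mul_left]
  refine tsum_congr fun n => ?_
  rw [pow_add, pow_mul, ← huv, show t / 2 = t / (2 * v) * v by field_simp]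
  ring

theorem besselI_le {t u v : ℝ} (ht : 0 < t) (hu : 0 < u) (hv : 0 < v)
    (huv : u * v = (t / 2) ^ 2) (x : ℕ) :
    besselI x t ≤ (t / (2 * v)) ^ x * (exp (u + v) / √t) := by
  rw [besselI_eq_mul_tsum hv.ne' huv]
  gcongr
  have hB : ∑' n : ℕ, (v ^ (n + x) / (n + x)!) ^ 2 ≤ exp (2 * v) / √(2 * v) :=
    (Summable.tsum_le_tsum_of_inj (· + x) (add_left_injective x) (fun _ _ => by positivity)
      (fun _ => le_rfl) ((summable_nat_add_iff x).mpr (summable_sq_pow_div_factorial v))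
      (summable_sq_pow_div_factorial v)).trans (tsum_sq_pow_div_factorial_le hv)
  have hprod : √(2 * u) * √(2 * v) = t := by
    rw [← sqrt_mul (by positivity), show 2 * u * (2 * v) = t ^ 2 by linear_combination 4 * huv]
    exact sqrt_sq ht.le
  calc ∑' n : ℕ, u ^ n / n ! * (v ^ (n + x) / (n + x)!)
      ≤ √(∑' n : ℕ, (u ^ n / n !) ^ 2) * √(∑' n : ℕ, (v ^ (n + x) / (n + x)!) ^ 2) :=
        tsum_mul_le_sqrt_mul_sqrt (fun _ => by positivity) (fun _ => by positivity)
          (summable_sq_pow_div_factorial u)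
          ((summable_nat_add_iff x).mpr (summable_sq_pow_div_factorial v))
    _ ≤ √(exp (2 * u) / √(2 * u)) * √(exp (2 * v) / √(2 * v)) := by
        gcongr
        exact tsum_sq_pow_div_factorial_le hu
    _ = √(exp (u + v) ^ 2 / t) := by
        rw [← sqrt_mul (by positivity), ← hprod, div_mul_div_comm, ← exp_add, ← exp_nat_mul]
        ring_nf
    _ = exp (u + v) / √t := by rw [sqrt_div' _ ht.le, sqrt_sq (exp_pos _).le]

theorem rpow_neg_mul_exp_le {q a : ℝ} (hq : 0 < q) (ha : 0 ≤ a) :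
    q ^ (-a) * exp (a / 2 * (1 - q⁻¹)) ≤ q ^ (-a / 2) := by
  calc q ^ (-a) * exp (a / 2 * (1 - q⁻¹)) ≤ q ^ (-a) * exp (a / 2 * log q) := by
        gcongr; exact one_sub_inv_le_log_of_pos hq
    _ = q ^ (-a / 2) := by rw [mul_comm (a / 2), ← rpow_def_of_pos hq, ← rpow_add hq]; ring_nf

theorem besselI_uniform_bound (t : ℝ) (ht : 0 < t) (x : ℕ) :
    Real.sqrt t * Real.exp (-t) * besselI x t ≤ (1 + x / t) ^ (-(x : ℝ) / 2) := by
  set q : ℝ := 1 + x / t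
  have hq : 0 < q := by positivity
  set u : ℝ := t ^ 2 / (2 * (t + x))
  set v : ℝ := (t + x) / 2
  have huv : u * v = (t / 2) ^ 2 := by simp only [u, v]; field_simp
  have hratio : t / (2 * v) = q⁻¹ := by simp only [v, q]; field_simp
  have hexponent : u + v - t = x / 2 * (1 - q⁻¹) := by simp only [u, v, q]; field_simp; ring
  calc √t * exp (-t) * besselI x t
      ≤ √t * exp (-t) * ((t / (2 * v)) ^ x * (exp (u + v) / √t)) := by
        gcongr; exact besselI_le ht (by positivity) (by positivity) huv x
    _ = q ^ (-(x : ℝ)) * exp (x / 2 * (1 - q⁻¹)) := by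
        have : √t ≠ 0 := by positivity
        rw [hratio, ← hexponent, rpow_neg hq.le, rpow_natCast, inv_pow, exp_sub, exp_neg]
        field_simp
    _ ≤ q ^ (-(x : ℝ) / 2) := rpow_neg_mul_exp_le hq (Nat.cast_nonneg x)
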